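/- arXiv:1810.07468 — 4 statements merged into one kernel-verified Lean document; each statement's English description precedes it below -/
import Mathlib

section
/- Let M ∈ ℝ^{d×k} have rank k, Ω = diag(ω) with ω > 0 entrywise, E ∈ ℝ^{d×k} with EEᵀ = MΩMᵀ and rank k, and O the orthogonal matrix with MΩ^{1/2} = EO. Then for each r, the whitened slice Hᵣ = E† M₃ᵣ (E†)ᵀ satisfies Hᵣ = O diag(mᵣ) Oᵀ, where M₃ᵣ = M Ω^{1/2} diag(mᵣ) Ω^{1/2} Mᵀ and mᵣ is the r-th row of M. -/
open Matrix

/-- Moore–Penrose pseudoinverse of a full-column-rank matrix. -/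
noncomputable def pinv {d k : ℕ} (E : Matrix (Fin d) (Fin k) ℝ) : Matrix (Fin k) (Fin d) ℝ :=
  (Eᵀ * E)⁻¹ * Eᵀ

lemma isUnit_det_of_rank_eq {k : ℕ} (A : Matrix (Fin k) (Fin k) ℝ) (h : A.rank = k) :
    IsUnit A.det := by
  rw [Matrix.rank] at h
  have hr : LinearMap.range A.mulVecLin = ⊤ := by
    apply Submodule.eq_top_of_finrank_eq
    simp [h]
  have hsurj : Function.Surjective A.mulVecLin := LinearMap.range_eq_top.mp hr
  have hinj : Function.Injective A.mulVecLin :=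
    (LinearMap.injective_iff_surjective).mpr hsurj
  rw [isUnit_iff_ne_zero]
  intro hdet
  obtain ⟨v, hv, hAv⟩ := (Matrix.exists_mulVec_eq_zero_iff).mpr hdet
  exact hv (hinj (by simpa using hAv))

lemma pinv_mul {d k : ℕ} (E : Matrix (Fin d) (Fin k) ℝ) (h : E.rank = k) :
    pinv E * E = 1 := by
  have hdet : IsUnit (Eᵀ * E).det :=
    isUnit_det_of_rank_eq _ (by rw [Matrix.rank_transpose_mul_self]; exact h)
  rw [pinv, Matrix.mul_assoc, Matrix.nonsing_inv_mul _ hdet]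

theorem whitened_slice (d k : ℕ) (M E : Matrix (Fin d) (Fin k) ℝ)
    (O : Matrix (Fin k) (Fin k) ℝ) (ω : Fin k → ℝ) (hω : ∀ i, 0 < ω i)
    (hrankM : M.rank = k) (hrankE : E.rank = k)
    (hE : E * Eᵀ = M * Matrix.diagonal ω * Mᵀ)
    (hO : Oᵀ * O = 1)
    (hMO : M * Matrix.diagonal (fun i => Real.sqrt (ω i)) = E * O)
    (r : Fin d) :
    pinv E *
        (M * Matrix.diagonal (fun i => Real.sqrt (ω i)) * Matrix.diagonal (fun i => M r i) *
          Matrix.diagonal (fun i => Real.sqrt (ω i)) * Mᵀ) *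
        (pinv E)ᵀ =
      O * Matrix.diagonal (fun i => M r i) * Oᵀ := by
  have hPE : pinv E * E = 1 := pinv_mul E hrankE
  have hPE' : Eᵀ * (pinv E)ᵀ = 1 := by
    rw [← Matrix.transpose_mul, hPE, Matrix.transpose_one]
  have expand : M * Matrix.diagonal (fun i => Real.sqrt (ω i)) * Matrix.diagonal (fun i => M r i) *
      Matrix.diagonal (fun i => Real.sqrt (ω i)) * Mᵀ =
      (M * Matrix.diagonal (fun i => Real.sqrt (ω i))) * Matrix.diagonal (fun i => M r i) *
      (M * Matrix.diagonal (fun i => Real.sqrt (ω i)))ᵀ := by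
    rw [Matrix.transpose_mul, Matrix.diagonal_transpose, ← Matrix.mul_assoc]
  rw [expand, hMO]
  simp only [Matrix.transpose_mul, Matrix.mul_assoc]
  rw [hPE', Matrix.mul_one, ← Matrix.mul_assoc, hPE, Matrix.one_mul]
end

section
/- Let O, O_k ∈ ℝ^{k×k} be orthogonal matrices and mᵣ ∈ ℝ^k for r = 1,...,d, where the rows mᵣ collectively form a matrix M of rank k. If O_kᵀ O diag(mᵣ) Oᵀ O_k is a diagonal matrix for every r = 1,...,d, and M has k distinct columns as vectors in ℝ^d, then Q = Oᵀ O_k is a product of a permutation matrix and a diagonal sign matrix. -/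
open Matrix

theorem simultaneous_diagonalizer_is_signed_permutation (d k : ℕ)
    (M : Matrix (Fin d) (Fin k) ℝ) (O Ok : Matrix (Fin k) (Fin k) ℝ)
    (hO : Oᵀ * O = 1) (hOk : Okᵀ * Ok = 1)
    (hrank : M.rank = k)
    (hcols : ∀ i j : Fin k, i ≠ j → (fun r => M r i) ≠ (fun r => M r j))
    (hdiag : ∀ r : Fin d,
      (Okᵀ * O * Matrix.diagonal (fun i => M r i) * Oᵀ * Ok).IsDiag) :
    ∃ (σ : Equiv.Perm (Fin k)) (ε : Fin k → ℝ), (∀ i, ε i = 1 ∨ ε i = -1) ∧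
      Oᵀ * Ok = σ.permMatrix ℝ * Matrix.diagonal ε := by
  set Q := Oᵀ * Ok with hQdef
  have hOO : O * Oᵀ = 1 := mul_eq_one_comm.mp hO
  have hQt : Qᵀ = Okᵀ * O := by rw [hQdef, transpose_mul, transpose_transpose]
  have hQorth : Qᵀ * Q = 1 := by
    rw [hQt, hQdef, mul_assoc, ← mul_assoc O, hOO, one_mul, hOk]
  have hQQt : Q * Qᵀ = 1 := mul_eq_one_comm.mp hQorth
  set Λ : Fin d → Matrix (Fin k) (Fin k) ℝ :=
    fun r => Qᵀ * Matrix.diagonal (fun i => M r i) * Q with hΛdef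
  have hΛdiag : ∀ r, (Λ r).IsDiag := by
    intro r
    have h := hdiag r
    have heq : Okᵀ * O * Matrix.diagonal (fun i => M r i) * Oᵀ * Ok = Λ r := by
      rw [hΛdef, hQt, hQdef]; simp only [Matrix.mul_assoc]
    rwa [heq] at h
  have keyM : ∀ r, Q * Λ r = Matrix.diagonal (fun i => M r i) * Q := by
    intro r
    have h1 : Q * Λ r = Q * Qᵀ * (Matrix.diagonal (fun i => M r i) * Q) := by
      rw [hΛdef]; simp only [Matrix.mul_assoc]
    rw [h1, hQQt, one_mul]
  have key : ∀ r i j, M r i * Q i j = Q i j * Λ r j j := by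
    intro r i j
    have h1 : (Matrix.diagonal (fun i => M r i) * Q) i j = M r i * Q i j := by
      rw [Matrix.diagonal_mul]
    have h2 : (Q * Λ r) i j = Q i j * Λ r j j := by
      rw [Matrix.mul_apply]
      refine Finset.sum_eq_single j (fun l _ hl => ?_) (by simp)
      rw [hΛdiag r hl, mul_zero]
    rw [← h1, ← h2, keyM r]
  have hM : ∀ r i j, Q i j ≠ 0 → M r i = Λ r j j := by
    intro r i j h
    have hk := key r i j
    rw [mul_comm (Q i j) (Λ r j j)] at hk
    exact mul_right_cancel₀ h hk
  have hnorm : ∀ j j', ∑ i, Q i j * Q i j' = (1 : Matrix (Fin k) (Fin k) ℝ) j j' := by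
    intro j j'
    rw [← hQorth, Matrix.mul_apply]
    simp [Matrix.transpose_apply]
  have hcol : ∀ j : Fin k, ∃ i, Q i j ≠ 0 ∧ ∀ i', Q i' j ≠ 0 → i' = i := by
    intro j
    have hex : ∃ i, Q i j ≠ 0 := by
      by_contra h
      push_neg at h
      have := hnorm j j
      simp [h, Matrix.one_apply] at this
    obtain ⟨i, hi⟩ := hex
    refine ⟨i, hi, fun i' hi' => ?_⟩
    by_contra hne
    exact hcols i' i hne (funext fun r => by rw [hM r i' j hi', hM r i j hi])
  choose f hf hu using hcol
  have hzero : ∀ i j, i ≠ f j → Q i j = 0 := by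
    intro i j h
    by_contra hq
    exact h (hu j i hq)
  have hinj : Function.Injective f := by
    intro j j' hjj'
    by_contra hne
    have h0 : (1 : Matrix (Fin k) (Fin k) ℝ) j j' = 0 := Matrix.one_apply_ne hne
    have hn := hnorm j j'
    rw [h0] at hn
    have hsum : ∑ i, Q i j * Q i j' = Q (f j) j * Q (f j) j' := by
      refine Finset.sum_eq_single (f j) (fun i _ hi => ?_) (by simp)
      rw [hzero i j hi, zero_mul]
    rw [hsum, hjj'] at hn
    exact (mul_ne_zero (hjj' ▸ hf j) (hf j')) hn
  have hbij : Function.Bijective f := Finite.injective_iff_bijective.mp hinj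
  set τ := Equiv.ofBijective f hbij with hτ
  have hfj : ∀ j, τ j = f j := fun j => rfl
  refine ⟨τ.symm, fun j => Q (f j) j, fun j => ?_, ?_⟩
  · have h1 : ∑ i, Q i j * Q i j = Q (f j) j * Q (f j) j := by
      refine Finset.sum_eq_single (f j) (fun i _ hi => ?_) (by simp)
      rw [hzero i j hi, zero_mul]
    have hn := hnorm j j
    rw [h1, Matrix.one_apply_eq] at hn
    exact mul_self_eq_one_iff.mp hn
  · ext i j
    rw [Matrix.mul_diagonal]
    by_cases h : i = f j
    · subst h
      have hs : τ.symm (f j) = j := by rw [← hfj]; exact τ.symm_apply_apply j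
      simp [Equiv.Perm.permMatrix, PEquiv.toMatrix_apply, Equiv.toPEquiv_apply, hs]
    · have hs : τ.symm i ≠ j := by
        intro hc
        apply h
        have := congrArg τ hc
        rw [Equiv.apply_symm_apply, hfj] at this
        exact this
      rw [hzero i j h]
      simp [Equiv.Perm.permMatrix, PEquiv.toMatrix_apply, Equiv.toPEquiv_apply, hs]
end

section
/- Let D ∈ ℝ^{l×d} with rows d₁,...,d_l, M ∈ ℝ^{d×k} with columns μ₁,...,μ_k, ω ∈ ℝ^k, and M₃ᵣ = Σ_h ω_h (μ_h)ᵣ μ_h μ_hᵀ. Then for each pair i ≠ j, sup over v ∈ 𝒱_M of Σ_{h=1}^k ⟨dᵢ,μ_h⟩⟨dⱼ,μ_h⟩ ω_h v_h equals (Σ_{r=1}^d (D M₃ᵣ Dᵀ)²_{i,j})^{1/2}, where 𝒱_M = {v ∈ ℝ^k : v = Mᵀα for some α ∈ ℝ^d with ‖α‖₂ ≤ 1}. -/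
/-!
With `c h = ⟨dᵢ, μ_h⟩ ⟨dⱼ, μ_h⟩ ω_h`, the objective is the linear functional `α ↦ ⟪M c, α⟫`,
so by Cauchy–Schwarz its supremum over the unit ball is `‖M c‖`. On the other side,
`(D M₃ᵣ Dᵀ)ᵢⱼ = ∑_h ω_h (μ_h)ᵣ ⟨dᵢ, μ_h⟩ ⟨dⱼ, μ_h⟩ = (M c)ᵣ`, so the square root is `‖M c‖` too.
-/

open Matrix
open RealInnerProductSpace

theorem sSup_inner_closedBall {E : Type*} [NormedAddCommGroup E] [InnerProductSpace ℝ E]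
    (w : E) : sSup {x : ℝ | ∃ α : E, ‖α‖ ≤ 1 ∧ x = ⟪w, α⟫} = ‖w‖ := by
  refine IsGreatest.csSup_eq ⟨?_, ?_⟩
  · by_cases hw : w = 0
    · exact ⟨0, by simp, by simp [hw]⟩
    · have hw' : ‖w‖ ≠ 0 := norm_ne_zero_iff.2 hw
      refine ⟨‖w‖⁻¹ • w, ?_, ?_⟩
      · rw [norm_smul, norm_inv, norm_norm, inv_mul_cancel₀ hw']
      · rw [real_inner_smul_right, real_inner_self_eq_norm_sq]
        field_simp
  · rintro x ⟨α, hα, rfl⟩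
    calc ⟪w, α⟫ ≤ ‖w‖ * ‖α‖ := real_inner_le_norm w α
      _ ≤ ‖w‖ := mul_le_of_le_one_right (norm_nonneg w) hα

theorem Matrix.mul_sum_smul_vecMulVec_mul_transpose_apply {R m n ι : Type*} [CommSemiring R]
    [Fintype n] [Fintype ι] (D : Matrix m n R) (a : ι → R) (u : ι → n → R) (i j : m) :
    (D * (∑ h, a h • vecMulVec (u h) (u h)) * Dᵀ) i j =
      ∑ h, a h * (D *ᵥ u h) i * (D *ᵥ u h) j := by
  simp only [Matrix.mul_sum, Matrix.sum_mul, Matrix.mul_smul, Matrix.smul_mul, mul_vecMulVec,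
    vecMulVec_mul, vecMul_transpose, Matrix.sum_apply, Matrix.smul_apply, vecMulVec_apply,
    smul_eq_mul, mul_assoc]

theorem sup_form_of_objective_general (d k l : ℕ)
    (D : Matrix (Fin l) (Fin d) ℝ) (M : Matrix (Fin d) (Fin k) ℝ) (ω : Fin k → ℝ)
    (i j : Fin l) :
    sSup {x : ℝ | ∃ α : EuclideanSpace ℝ (Fin d), ‖α‖ ≤ 1 ∧
        x = ∑ h : Fin k, (∑ r : Fin d, D i r * M r h) * (∑ r : Fin d, D j r * M r h) *
              ω h * (∑ r : Fin d, M r h * α r)} =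
      Real.sqrt (∑ r : Fin d,
        ((D * (∑ h : Fin k, (ω h * M r h) •
            Matrix.vecMulVec (fun a => M a h) (fun b => M b h)) * Dᵀ) i j) ^ 2) := by
  set c : Fin k → ℝ := fun h => (D * M) i h * (D * M) j h * ω h
  set w : EuclideanSpace ℝ (Fin d) := WithLp.toLp 2 (M *ᵥ c)
  have objective_eq_inner (α : EuclideanSpace ℝ (Fin d)) :
      ∑ h : Fin k, (∑ r : Fin d, D i r * M r h) * (∑ r : Fin d, D j r * M r h) *
        ω h * (∑ r : Fin d, M r h * α r) = ⟪w, α⟫ := by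
    rw [EuclideanSpace.inner_eq_star_dotProduct, star_trivial]
    exact dotProduct_transpose_mulVec M c α.ofLp
  have entry_eq (r : Fin d) :
      (D * (∑ h : Fin k, (ω h * M r h) •
        Matrix.vecMulVec (fun a => M a h) (fun b => M b h)) * Dᵀ) i j = w r := by
    rw [Matrix.mul_sum_smul_vecMulVec_mul_transpose_apply]
    simp only [w, c, mulVec, dotProduct]
    exact Finset.sum_congr rfl fun h _ => by simp only [mul_apply]; ring
  simp_rw [objective_eq_inner, entry_eq, sSup_inner_closedBall, EuclideanSpace.norm_eq,
    Real.norm_eq_abs, sq_abs]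

theorem sup_form_of_objective (d k l : ℕ)
    (D : Matrix (Fin l) (Fin d) ℝ) (M : Matrix (Fin d) (Fin k) ℝ) (ω : Fin k → ℝ)
    (i j : Fin l) (hij : i ≠ j) :
    sSup {x : ℝ | ∃ α : EuclideanSpace ℝ (Fin d), ‖α‖ ≤ 1 ∧
        x = ∑ h : Fin k, (∑ r : Fin d, D i r * M r h) * (∑ r : Fin d, D j r * M r h) *
              ω h * (∑ r : Fin d, M r h * α r)} =
      Real.sqrt (∑ r : Fin d,
        ((D * (∑ h : Fin k, (ω h * M r h) •
            Matrix.vecMulVec (fun a => M a h) (fun b => M b h)) * Dᵀ) i j) ^ 2) :=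
  sup_form_of_objective_general d k l D M ω i j
end

section
/- A symmetric 2×2×2 real tensor T is orthogonally decomposable (i.e., T = λ₁ u⊗u⊗u + λ₂ v⊗v⊗v for some orthonormal u,v ∈ ℝ² and reals λ₁,λ₂) if and only if T_{1,1,1} T_{2,2,1} + T_{2,1,1} T_{2,2,2} = T²_{2,1,1} + T²_{2,2,1}. -/
/-- halving lemma: from a point on the circle produce its "half angle" -/
lemma half_point (s t : ℝ) (h : s^2 + t^2 = 1) :
    ∃ x y : ℝ, x^2 + y^2 = 1 ∧ y^2 - x^2 = s ∧ 2*(x*y) = t := by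
  have hs1 : -1 ≤ s := by nlinarith [sq_nonneg t, sq_nonneg (s+1)]
  have hs2 : s ≤ 1 := by nlinarith [sq_nonneg t, sq_nonneg (s-1)]
  have h1 : (0:ℝ) ≤ (1-s)/2 := by linarith
  have h2 : (0:ℝ) ≤ (1+s)/2 := by linarith
  set x := Real.sqrt ((1-s)/2) with hxdef
  have hx2 : x^2 = (1-s)/2 := Real.sq_sqrt h1
  have hy2' : (Real.sqrt ((1+s)/2))^2 = (1+s)/2 := Real.sq_sqrt h2
  have hprod : x * Real.sqrt ((1+s)/2) = |t|/2 := by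
    rw [← Real.sqrt_mul h1]
    have : (1-s)/2 * ((1+s)/2) = (t/2)^2 := by nlinarith
    rw [this, Real.sqrt_sq_eq_abs, abs_div]
    simp
  rcases le_or_gt 0 t with ht | ht
  · refine ⟨x, Real.sqrt ((1+s)/2), by rw [hx2, hy2']; ring, by rw [hx2, hy2']; ring, ?_⟩
    rw [hprod, abs_of_nonneg ht]; ring
  · refine ⟨x, -Real.sqrt ((1+s)/2), ?_, ?_, ?_⟩
    · rw [hx2]; rw [neg_pow]; rw [hy2']; ring
    · rw [neg_pow, hy2', hx2]; ring
    · have : x * -Real.sqrt ((1+s)/2) = -(|t|/2) := by rw [← hprod]; ring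
      rw [this, abs_of_neg ht]; ring

/-- construct a unit double-angle point orthogonal to every vector parallel to (p,q) -/
lemma mk_st (p q : ℝ) (h : p ≠ 0 ∨ q ≠ 0) :
    ∃ s t : ℝ, s^2 + t^2 = 1 ∧ ∀ P Q : ℝ, Q*p - P*q = 0 → P*s + Q*(t/2) = 0 := by
  have hr2 : 0 < q^2 + 4*p^2 := by
    rcases h with h | h
    · have := sq_pos_of_ne_zero (a := p) h; nlinarith [sq_nonneg q]
    · have := sq_pos_of_ne_zero (a := q) h; nlinarith [sq_nonneg p]
  set r := Real.sqrt (q^2 + 4*p^2) with hrdef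
  have hrpos : 0 < r := Real.sqrt_pos.mpr hr2
  have hrsq : r^2 = q^2 + 4*p^2 := Real.sq_sqrt hr2.le
  have hrne : r ≠ 0 := ne_of_gt hrpos
  refine ⟨-q/r, 2*p/r, ?_, ?_⟩
  · have e : (-q/r)^2 + (2*p/r)^2 = (q^2 + 4*p^2)/r^2 := by ring
    rw [e, ← hrsq, div_self (pow_ne_zero 2 hrne)]
  · intro P Q hPQ
    have e : P*(-q/r) + Q*((2*p/r)/2) = (Q*p - P*q)/r := by ring
    rw [e, hPQ, zero_div]

theorem odeco_characterization_2x2x2 (T : Fin 2 → Fin 2 → Fin 2 → ℝ)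
    (hsym1 : ∀ i j k, T i j k = T j i k) (hsym2 : ∀ i j k, T i j k = T i k j) :
    (∃ (u v : Fin 2 → ℝ) (l1 l2 : ℝ),
        (∑ i, u i * u i) = 1 ∧ (∑ i, v i * v i) = 1 ∧ (∑ i, u i * v i) = 0 ∧
        ∀ i j k, T i j k = l1 * u i * u j * u k + l2 * v i * v j * v k) ↔
      T 0 0 0 * T 1 1 0 + T 1 0 0 * T 1 1 1 = (T 1 0 0) ^ 2 + (T 1 1 0) ^ 2 := by
  constructor
  · rintro ⟨u, v, l1, l2, hu, hv, ho, hT⟩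
    simp only [Fin.sum_univ_two] at hu hv ho
    rw [hT 0 0 0, hT 1 1 0, hT 1 0 0, hT 1 1 1]
    linear_combination (l1*l2*(u 0 * v 1 - u 1 * v 0)^2) * ho
  · intro h
    set a := T 0 0 0 with hadef
    set b := T 1 0 0 with hbdef
    set c := T 1 1 0 with hcdef
    set d := T 1 1 1 with hddef
    -- symmetry identifications
    have hb1 : T 0 0 1 = b := by rw [hsym2 0 0 1, hsym1 0 1 0]
    have hb2 : T 0 1 0 = b := hsym1 0 1 0
    have hc1 : T 0 1 1 = c := by rw [hsym1 0 1 1, hsym2 1 0 1]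
    have hc2 : T 1 0 1 = c := hsym2 1 0 1
    -- obtain x y with x^2+y^2=1 and the two eigen-equations
    obtain ⟨x, y, hxy, he1, he2⟩ :
        ∃ x y : ℝ, x^2 + y^2 = 1 ∧ b*(y^2-x^2) + (a-c)*(x*y) = 0 ∧
          c*(y^2-x^2) + (b-d)*(x*y) = 0 := by
      by_cases hA : b ≠ 0 ∨ a - c ≠ 0
      · obtain ⟨s, t, hst, horth⟩ := mk_st b (a-c) hA
        obtain ⟨x, y, hxy, hs, ht⟩ := half_point s t hst
        refine ⟨x, y, hxy, ?_, ?_⟩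
        · have h1 := horth b (a-c) (by ring)
          linear_combination h1 + b*hs + ((a-c)/2)*ht
        · have h2 := horth c (b-d) (by linear_combination -h)
          linear_combination h2 + c*hs + ((b-d)/2)*ht
      · push_neg at hA
        obtain ⟨hb0, hac⟩ := hA
        by_cases hB : c ≠ 0 ∨ b - d ≠ 0
        · obtain ⟨s, t, hst, horth⟩ := mk_st c (b-d) hB
          obtain ⟨x, y, hxy, hs, ht⟩ := half_point s t hst
          refine ⟨x, y, hxy, ?_, ?_⟩
          · linear_combination (y^2-x^2)*hb0 + (x*y)*hac
          · have h2 := horth c (b-d) (by ring)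
            linear_combination h2 + c*hs + ((b-d)/2)*ht
        · push_neg at hB
          obtain ⟨hc0, hbd⟩ := hB
          exact ⟨1, 0, by norm_num,
            by linear_combination (0^2-1^2:ℝ)*hb0 + ((1:ℝ)*0)*hac,
            by linear_combination (0^2-1^2:ℝ)*hc0 + ((1:ℝ)*0)*hbd⟩
    -- build the decomposition
    refine ⟨![x, y], ![-y, x],
      a*x^3 + 3*b*x^2*y + 3*c*x*y^2 + d*y^3,
      -a*y^3 + 3*b*x*y^2 - 3*c*x^2*y + d*x^3, ?_, ?_, ?_, ?_⟩
    · simp [Fin.sum_univ_two]; linear_combination hxy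
    · simp [Fin.sum_univ_two]; linear_combination hxy
    · simp [Fin.sum_univ_two]; ring
    · simp only [Fin.forall_fin_two, Matrix.cons_val_zero, Matrix.cons_val_one,
        Matrix.head_cons]
      refine ⟨⟨⟨?_, ?_⟩, ?_, ?_⟩, ⟨?_, ?_⟩, ?_, ?_⟩
      · -- 000
        rw [← hadef]
        linear_combination (2*x*y + x*y^3 + x^3*y) * he1
          + (-2*y^2 + 2*y^4 + 2*x^2 - 2*x^4) * he2
          + (2*d*x*y^3 - 2*d*x^3*y - 2*c*y^4 + 2*c*x^2*y^2 - 2*c*x^4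
             - a - a*x^2 - a*y^2 - a*x^4 - a*y^4) * hxy
      · -- 001
        rw [hb1]
        linear_combination (y^4 - x^4) * he1
          + (2*x*y - x*y^3 - x^3*y) * he2
          + (-2*d*x^2*y^2 + 2*c*x*y^3 - 2*c*x^3*y
             - b - b*x^2 - b*y^2 - b*x^4 - b*y^4) * hxy
      · -- 010
        rw [hb2]
        linear_combination (y^4 - x^4) * he1
          + (2*x*y - x*y^3 - x^3*y) * he2
          + (-2*d*x^2*y^2 + 2*c*x*y^3 - 2*c*x^3*y
             - b - b*x^2 - b*y^2 - b*x^4 - b*y^4) * hxy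
      · -- 011
        rw [hc1]
        linear_combination (-x*y^3 - x^3*y) * he1
          + (y^4 - x^4) * he2
          + (-c - c*x^2 - c*y^2 - c*x^4 - c*y^4 - 2*c*x^2*y^2) * hxy
      · -- 100
        rw [← hbdef]
        linear_combination (y^4 - x^4) * he1
          + (2*x*y - x*y^3 - x^3*y) * he2
          + (-2*d*x^2*y^2 + 2*c*x*y^3 - 2*c*x^3*y
             - b - b*x^2 - b*y^2 - b*x^4 - b*y^4) * hxy
      · -- 101
        rw [hc2]
        linear_combination (-x*y^3 - x^3*y) * he1
          + (y^4 - x^4) * he2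
          + (-c - c*x^2 - c*y^2 - c*x^4 - c*y^4 - 2*c*x^2*y^2) * hxy
      · -- 110
        rw [← hcdef]
        linear_combination (-x*y^3 - x^3*y) * he1
          + (y^4 - x^4) * he2
          + (-c - c*x^2 - c*y^2 - c*x^4 - c*y^4 - 2*c*x^2*y^2) * hxy
      · -- 111
        rw [← hddef]
        linear_combination (-3*x*y^3 - 3*x^3*y) * he2
          + (-d - d*x^2 - d*y^2 - d*x^4 - d*y^4 - 2*d*x^2*y^2) * hxy
end
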